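/- The top-k entropy loss, defined as the conjugate of the restricted softmax conjugate, reduces to the softmax loss when k = 1: with a_j = u_j for j ≠ y and s = ⟨1,x⟩, one has max{ ⟨a,x⟩ - (1-s)log(1-s) - ⟨x, log x⟩ : x ∈ Δ^α_1, ⟨1,x⟩ = s } = log(1 + sum_{j≠y} e^{a_j}), where Δ^α_1 = {x : ⟨1,x⟩ ≤ 1, 0 ≤ x_i ≤ ⟨1,x⟩} is the simplex. -/

import Mathlib

/-!
Adjoin to `Fin n` an extra coordinate with score `0` and mass `1 - ∑ x`. The objective becomes
`⟨b, p⟩ - ⟨p, log p⟩` for a probability vector `p` on `Option (Fin n)`, and Gibbs' variational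
principle bounds this by `log ∑ exp b = log (1 + ∑ exp a)`, with equality at `p = softmax b`.
The principle is `p log c - p log p ≤ c - p` (that is, `log t ≤ t - 1`) summed with `c = softmax b`.
-/

open Real Finset

lemma mul_log_sub_mul_log_le {p c : ℝ} (hp : 0 ≤ p) (hc : 0 < c) :
    p * log c - p * log p ≤ c - p := by
  rcases hp.eq_or_lt with rfl | hp
  · simpa using hc.le
  calc p * log c - p * log p = p * log (c / p) := by rw [log_div hc.ne' hp.ne']; ring
    _ ≤ p * (c / p - 1) := by gcongr; exact log_le_sub_one_of_pos (div_pos hc hp)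
    _ = c - p := by field_simp

section Softmax

variable {ι : Type*} [Fintype ι]

noncomputable def softmax (b : ι → ℝ) (i : ι) : ℝ := exp (b i) / ∑ j, exp (b j)

lemma sum_exp_pos [Nonempty ι] (b : ι → ℝ) : 0 < ∑ j, exp (b j) :=
  Finset.sum_pos (fun j _ => exp_pos (b j)) univ_nonempty

lemma softmax_pos [Nonempty ι] (b : ι → ℝ) (i : ι) : 0 < softmax b i :=
  div_pos (exp_pos _) (sum_exp_pos b)

lemma sum_softmax [Nonempty ι] (b : ι → ℝ) : ∑ i, softmax b i = 1 := by
  simp only [softmax, ← Finset.sum_div]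
  exact div_self (sum_exp_pos b).ne'

lemma log_softmax [Nonempty ι] (b : ι → ℝ) (i : ι) :
    log (softmax b i) = b i - log (∑ j, exp (b j)) := by
  rw [softmax, log_div (exp_ne_zero _) (sum_exp_pos b).ne', log_exp]

theorem sum_mul_sub_sum_mul_log_le_log_sum_exp (b p : ι → ℝ) (hp : ∀ i, 0 ≤ p i)
    (hp_sum : ∑ i, p i = 1) :
    ∑ i, b i * p i - ∑ i, p i * log (p i) ≤ log (∑ i, exp (b i)) := by
  have : Nonempty ι := by
    by_contra h
    simp [not_nonempty_iff.mp h] at hp_sum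
  have hgibbs : ∑ i, (p i * log (softmax b i) - p i * log (p i)) ≤ ∑ i, (softmax b i - p i) :=
    sum_le_sum fun i _ => mul_log_sub_mul_log_le (hp i) (softmax_pos b i)
  simp only [log_softmax, sum_sub_distrib, sum_softmax, hp_sum, mul_sub, ← sum_mul] at hgibbs
  simp only [mul_comm (b _) (p _)]
  linarith

theorem sum_mul_softmax_sub_sum_mul_log_softmax [Nonempty ι] (b : ι → ℝ) :
    ∑ i, b i * softmax b i - ∑ i, softmax b i * log (softmax b i) = log (∑ i, exp (b i)) := by
  simp only [log_softmax, mul_sub, sum_sub_distrib, ← sum_mul, sum_softmax, mul_comm (b _)]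
  ring

end Softmax

lemma sum_mul_sub_mul_log_eq_sum_option {ι : Type*} [Fintype ι] (a x : ι → ℝ)
    (b p : Option ι → ℝ)
    (hb_none : b none = 0) (hb_some : ∀ i, b (some i) = a i)
    (hp_none : p none = 1 - ∑ i, x i) (hp_some : ∀ i, p (some i) = x i) :
    ∑ i, a i * x i - (1 - ∑ i, x i) * log (1 - ∑ i, x i) - ∑ i, x i * log (x i) =
      ∑ o, b o * p o - ∑ o, p o * log (p o) := by
  simp only [Fintype.sum_option, hb_none, hb_some, hp_none, hp_some]
  ring

/-- For `k = 1`, the top-`k` entropy loss reduces to the softmax loss: with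
`s = ⟨1,x⟩`, the maximum of `⟨a,x⟩ - (1-s) log (1-s) - ⟨x, log x⟩` over the
unit simplex `Δ^α₁ = {x : 0 ≤ x, x i ≤ ⟨1,x⟩, ⟨1,x⟩ ≤ 1}` equals
`log (1 + ∑ j exp (a j))`, and the maximum is attained. -/
theorem stmt13 (n : ℕ) (a : Fin n → ℝ) :
    IsGreatest {r : ℝ | ∃ x : Fin n → ℝ,
        (∀ i, 0 ≤ x i) ∧ (∀ i, x i ≤ ∑ j, x j) ∧ (∑ i, x i ≤ 1) ∧
        r = ∑ i, a i * x i - (1 - ∑ i, x i) * Real.log (1 - ∑ i, x i)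
              - ∑ i, x i * Real.log (x i)}
      (Real.log (1 + ∑ i, Real.exp (a i))) := by
  set b : Option (Fin n) → ℝ := fun o => o.elim 0 a
  have hlog : log (1 + ∑ i, exp (a i)) = log (∑ o, exp (b o)) := by
    simp [b, Fintype.sum_option]
  rw [hlog]
  constructor
  · have hsum := sum_softmax b
    rw [Fintype.sum_option] at hsum
    refine ⟨fun i => softmax b (some i), fun i => (softmax_pos b _).le, fun i => ?_, ?_, ?_⟩
    · exact single_le_sum (fun j _ => (softmax_pos b (some j)).le) (mem_univ i)
    · linarith [softmax_pos b none]
    · rw [sum_mul_sub_mul_log_eq_sum_option a _ b (softmax b) rfl (fun _ => rfl) (by linarith)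
        (fun _ => rfl), sum_mul_softmax_sub_sum_mul_log_softmax]
  · rintro r ⟨x, hx, -, hx_sum, rfl⟩
    set p : Option (Fin n) → ℝ := fun o => o.elim (1 - ∑ i, x i) x
    rw [sum_mul_sub_mul_log_eq_sum_option a x b p rfl (fun _ => rfl) rfl (fun _ => rfl)]
    refine sum_mul_sub_sum_mul_log_le_log_sum_exp b p (fun o => ?_) ?_
    · cases o with
      | none => exact sub_nonneg.mpr hx_sum
      | some i => exact hx i
    · simp [p, Fintype.sum_option]
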